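/- arXiv:1710.11125 — 6 statements merged into one kernel-verified Lean document; each statement's English description precedes it below -/
import Mathlib

section
/- Let $\Phi \in \mathbb{R}^{M \times N}$, let $x \in \mathbb{R}^N$ have block structure over index set $\Omega = \{1, \dots, l\}$ with $l \ge 2$, and let $1 \le n \le m \le l$. Let $\{\Pi_i\}_{i \in \mathcal{J}}$ enumerate all size-$m$ subsets of $\Omega$ and $\{\Lambda_j\}_{j \in \mathcal{K}}$ all size-$n$ subsets of $\Omega$. Then $\sum_{i \in \mathcal{J}} \frac{(l-n)\|\Phi x_{\Pi_i}\|_2^2}{m |\mathcal{J}|} - \sum_{j \in \mathcal{K}} \frac{(l-m)\|\Phi x_{\Lambda_j}\|_2^2}{n |\mathcal{K}|} = \frac{(m-n)\|\Phi x\|_2^2}{l}$. -/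
/-!
Writing `x_P = ∑_{i ∈ P} x_{i}` turns `‖Φ x_P‖²` into the quadratic form `∑_{i,j ∈ P} gᵢⱼ` of the
Gram matrix `gᵢⱼ = ⟪Φ x_{i}, Φ x_{j}⟫`. Among the `C(l,k)` subsets of size `k`, a fraction `k / l`
contains a given block and a fraction `k(k-1) / (l(l-1))` a given pair of distinct blocks, so
`l(l-1) ∑_{|P| = k} ‖Φ x_P‖² = C(l,k) (k(l-k) tr g + k(k-1) ‖Φ x‖²)`. In the combination of the
theorem the trace terms cancel and `(m-n)(l-1) ‖Φ x‖²` remains.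
-/

open Finset

/-- The space of block-structured vectors in `ℝ^N`, where `N = d 0 + ⋯ + d (l-1)`:
block `i` lives in `ℝ^(d i)` and the whole space carries the `ℓ₂` norm. -/
abbrev BlockVec {l : ℕ} (d : Fin l → ℕ) :=
  PiLp 2 (fun i : Fin l => EuclideanSpace ℝ (Fin (d i)))

/-- `x` is block `s`-sparse: at most `s` nonzero blocks. -/
def BlockSparse {l : ℕ} {d : Fin l → ℕ} (s : ℕ) (x : BlockVec d) : Prop :=
  ∃ S : Finset (Fin l), S.card ≤ s ∧ ∀ i ∉ S, x i = 0

/-- The mixed `ℓ₂/ℓ₁` norm `‖x‖_{2,ℐ} = ∑ i, ‖x[i]‖₂`. -/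
noncomputable def blockL1 {l : ℕ} {d : Fin l → ℕ} (x : BlockVec d) : ℝ :=
  ∑ i, ‖x i‖

/-- `x_S`: keep the blocks indexed by `S`, zero out the rest. -/
def blockRestrict {l : ℕ} {d : Fin l → ℕ} (x : BlockVec d) (S : Finset (Fin l)) :
    BlockVec d := WithLp.toLp 2 (fun i => if i ∈ S then x i else 0)

namespace Finset

variable {α : Type*} [DecidableEq α] {s : Finset α}

theorem card_mul_card_filter_mem_powersetCard {a : α} (ha : a ∈ s) (k : ℕ) :
    #s * #{P ∈ s.powersetCard k | a ∈ P} = k * (#s).choose k := by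
  obtain _ | k := k
  · simp
  obtain ⟨n, hn⟩ := Nat.exists_eq_succ_of_ne_zero (card_ne_zero_of_mem ha)
  have hfilter : {P ∈ s.powersetCard (k + 1) | a ∈ P}
      = {P ∈ s.powersetCard (k + 1) | {a} ⊆ P} := by
    simp only [singleton_subset_iff]
  rw [hfilter, card_filter_powersetCard_subset _ _ _ (singleton_subset_iff.2 ha) (by simp),
    card_singleton, hn, Nat.succ_sub_one, Nat.add_sub_cancel, Nat.add_one_mul_choose_eq, mul_comm]

theorem card_mul_card_filter_mem_and_mem_powersetCard {R : Type*} [CommRing R] {a b : α}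
    (ha : a ∈ s) (hb : b ∈ s) (hab : a ≠ b) (k : ℕ) :
    ((#s : R) * (#s - 1)) * #{P ∈ s.powersetCard k | a ∈ P ∧ b ∈ P}
      = k * (k - 1) * (#s).choose k := by
  obtain hk | ⟨k, rfl⟩ : k < 2 ∨ ∃ j, k = j + 2 :=
    (lt_or_ge k 2).imp_right Nat.exists_eq_add_of_le'
  · have hempty : {P ∈ s.powersetCard k | a ∈ P ∧ b ∈ P} = ∅ := by
      refine filter_false_of_mem fun P hP ⟨haP, hbP⟩ => hab ?_
      exact card_le_one.1 (by rw [(mem_powersetCard.1 hP).2]; omega) a haP b hbP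
    rw [hempty]
    interval_cases k <;> simp
  have hsub : {a, b} ⊆ s := insert_subset ha (singleton_subset_iff.2 hb)
  obtain ⟨n, hn⟩ : ∃ n, #s = n + 2 :=
    Nat.exists_eq_add_of_le' (card_pair hab ▸ card_le_card hsub)
  have hfilter : {P ∈ s.powersetCard (k + 2) | a ∈ P ∧ b ∈ P}
      = {P ∈ s.powersetCard (k + 2) | {a, b} ⊆ P} := by
    simp only [insert_subset_iff, singleton_subset_iff]
  rw [hfilter, card_filter_powersetCard_subset _ _ _ hsub (by simp [card_pair hab]),
    card_pair hab, hn, Nat.add_sub_cancel, Nat.add_sub_cancel]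
  have h₁ := congrArg (Nat.cast : ℕ → R) (Nat.add_one_mul_choose_eq n k)
  have h₂ := congrArg (Nat.cast : ℕ → R) (Nat.add_one_mul_choose_eq (n + 1) (k + 1))
  push_cast at h₁ h₂ ⊢
  linear_combination (n + 2 : R) * h₁ + (k + 1 : R) * h₂

theorem sum_powersetCard_sum_sum_eq_sum_sum_card_mul {R : Type*} [CommRing R]
    (g : α → α → R) (k : ℕ) :
    ∑ P ∈ s.powersetCard k, ∑ i ∈ P, ∑ j ∈ P, g i j
      = ∑ i ∈ s, ∑ j ∈ s, #{P ∈ s.powersetCard k | i ∈ P ∧ j ∈ P} * g i j := by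
  have hexpand : ∀ P ∈ s.powersetCard k, ∑ i ∈ P, ∑ j ∈ P, g i j
      = ∑ i ∈ s, ∑ j ∈ s, if i ∈ P ∧ j ∈ P then g i j else 0 := fun P hP => by
    have hrow : ∀ i, (∑ j ∈ s, if i ∈ P ∧ j ∈ P then g i j else 0)
        = if i ∈ P then ∑ j ∈ s, (if j ∈ P then g i j else 0) else 0 := fun i => by
      by_cases hi : i ∈ P <;> simp [hi]
    simp only [hrow, sum_ite_mem, inter_eq_right.2 (mem_powersetCard.1 hP).1]
  rw [sum_congr rfl hexpand, sum_comm]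
  refine sum_congr rfl fun i _ => ?_
  rw [sum_comm]
  refine sum_congr rfl fun j _ => ?_
  rw [← sum_filter, sum_const, nsmul_eq_mul]

theorem card_mul_card_sub_one_mul_sum_powersetCard_sum_sum {R : Type*} [CommRing R]
    (g : α → α → R) (k : ℕ) :
    ((#s : R) * (#s - 1)) * ∑ P ∈ s.powersetCard k, ∑ i ∈ P, ∑ j ∈ P, g i j
      = (#s).choose k
          * ((k : R) * (#s - k) * ∑ i ∈ s, g i i + k * (k - 1) * ∑ i ∈ s, ∑ j ∈ s, g i j) := by
  have hcoef : ∀ i ∈ s, ∀ j ∈ s,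
      ((#s : R) * (#s - 1)) * #{P ∈ s.powersetCard k | i ∈ P ∧ j ∈ P}
        = (#s).choose k * (k * (k - 1) + if i = j then (k : R) * (#s - k) else 0) := by
    intro i hi j hj
    by_cases hij : i = j
    · subst hij
      have hdiag := congrArg (Nat.cast : ℕ → R) (card_mul_card_filter_mem_powersetCard hi k)
      push_cast at hdiag
      simp only [and_self, if_true]
      linear_combination ((#s : R) - 1) * hdiag
    · rw [card_mul_card_filter_mem_and_mem_powersetCard hi hj hij, if_neg hij]
      ring
  calc ((#s : R) * (#s - 1)) * ∑ P ∈ s.powersetCard k, ∑ i ∈ P, ∑ j ∈ P, g i j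
      = ∑ i ∈ s, ∑ j ∈ s, (#s).choose k * (k * (k - 1) + if i = j then (k : R) * (#s - k) else 0)
          * g i j := by
        simp only [sum_powersetCard_sum_sum_eq_sum_sum_card_mul, mul_sum, ← mul_assoc]
        exact sum_congr rfl fun i hi => sum_congr rfl fun j hj => by rw [hcoef i hi j hj]
    _ = _ := by
        simp only [mul_add, add_mul, sum_add_distrib, ite_mul, zero_mul, mul_ite, mul_zero,
          sum_ite_eq, sum_ite_mem, inter_self, mul_sum, mul_assoc]
        exact add_comm _ _

end Finset

section BlockRestrict

variable {l : ℕ} {d : Fin l → ℕ}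

theorem blockRestrict_eq_sum_blockRestrict_singleton (x : BlockVec d) (S : Finset (Fin l)) :
    blockRestrict x S = ∑ i ∈ S, blockRestrict x {i} := by
  ext j : 1
  simp [blockRestrict, WithLp.ofLp_sum, Finset.sum_apply]

theorem blockRestrict_univ (x : BlockVec d) : blockRestrict x univ = x := by
  ext j : 1
  simp [blockRestrict]

theorem norm_map_blockRestrict_sq {F : Type*} [NormedAddCommGroup F] [InnerProductSpace ℝ F]
    (Φ : BlockVec d →ₗ[ℝ] F) (x : BlockVec d) (S : Finset (Fin l)) :
    ‖Φ (blockRestrict x S)‖ ^ 2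
      = ∑ i ∈ S, ∑ j ∈ S, inner ℝ (Φ (blockRestrict x {i})) (Φ (blockRestrict x {j})) := by
  rw [blockRestrict_eq_sum_blockRestrict_singleton, map_sum, ← real_inner_self_eq_norm_sq,
    sum_inner]
  simp only [inner_sum]

theorem mul_sum_powersetCard_norm_map_blockRestrict_sq {F : Type*} [NormedAddCommGroup F]
    [InnerProductSpace ℝ F] (Φ : BlockVec d →ₗ[ℝ] F) (x : BlockVec d) (k : ℕ) :
    ((l : ℝ) * (l - 1)) * ∑ P ∈ (univ : Finset (Fin l)).powersetCard k, ‖Φ (blockRestrict x P)‖ ^ 2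
      = l.choose k
          * (k * (l - k) * ∑ i, ‖Φ (blockRestrict x {i})‖ ^ 2 + k * (k - 1) * ‖Φ x‖ ^ 2) := by
  simpa only [real_inner_self_eq_norm_sq, ← norm_map_blockRestrict_sq, blockRestrict_univ,
    card_univ, Fintype.card_fin] using card_mul_card_sub_one_mul_sum_powersetCard_sum_sum
      (s := univ) (fun i j => inner ℝ (Φ (blockRestrict x {i})) (Φ (blockRestrict x {j}))) k

end BlockRestrict

/-- Lemma 2.2, first identity. -/
theorem block_subset_norm_identity {l M : ℕ} {d : Fin l → ℕ}
    (Φ : BlockVec d →ₗ[ℝ] EuclideanSpace ℝ (Fin M))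
    (x : BlockVec d) (hl : 2 ≤ l) (m n : ℕ) (hn : 1 ≤ n) (hnm : n ≤ m) (hml : m ≤ l) :
    ∑ P ∈ (Finset.univ : Finset (Fin l)).powersetCard m,
        ((l : ℝ) - n) * ‖Φ (blockRestrict x P)‖ ^ 2 / (m * l.choose m)
      - ∑ L ∈ (Finset.univ : Finset (Fin l)).powersetCard n,
          ((l : ℝ) - m) * ‖Φ (blockRestrict x L)‖ ^ 2 / (n * l.choose n)
      = ((m : ℝ) - n) * ‖Φ x‖ ^ 2 / l := by
  have hl₀ : (l : ℝ) ≠ 0 := Nat.cast_ne_zero.2 (by omega)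
  have hl₁ : (l : ℝ) - 1 ≠ 0 := sub_ne_zero.2 (Nat.cast_ne_one.2 (by omega))
  have hsum : ∀ k, ∑ P ∈ (univ : Finset (Fin l)).powersetCard k, ‖Φ (blockRestrict x P)‖ ^ 2
      = l.choose k * (k * (l - k) * ∑ i, ‖Φ (blockRestrict x {i})‖ ^ 2 + k * (k - 1) * ‖Φ x‖ ^ 2)
        / (l * (l - 1)) := fun k => by
    rw [eq_div_iff (mul_ne_zero hl₀ hl₁), mul_comm]
    exact mul_sum_powersetCard_norm_map_blockRestrict_sq Φ x k
  rw [← sum_div, ← mul_sum, hsum, ← sum_div, ← mul_sum, hsum]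
  have hm : (m : ℝ) ≠ 0 := Nat.cast_ne_zero.2 (by omega)
  have hn' : (n : ℝ) ≠ 0 := Nat.cast_ne_zero.2 (by omega)
  have hCm : (l.choose m : ℝ) ≠ 0 := Nat.cast_ne_zero.2 (Nat.choose_pos hml).ne'
  have hCn : (l.choose n : ℝ) ≠ 0 := Nat.cast_ne_zero.2 (Nat.choose_pos (hnm.trans hml)).ne'
  field_simp
  ring
end

section
/- Let $\alpha > 0$ and let $s$ be a positive integer. Let $x \in \mathbb{R}^N$ have block structure with $\|x\|_{2,\infty} \le \alpha$ and $\|x\|_{2,\mathcal{I}} \le s\alpha$. Then $x$ can be written as a convex combination $x = \sum_i \lambda_i u_i$ where each $u_i$ is block $s$-sparse with $\mathrm{supp}(u_i) \subseteq \mathrm{supp}(x)$, $\|u_i\|_{2,\mathcal{I}} = \|x\|_{2,\mathcal{I}}$, $\|u_i\|_{2,\infty} \le \alpha$, $0 \le \lambda_i \le 1$, $\sum_i \lambda_i = 1$, and moreover $\sum_i \lambda_i \|u_i\|_{2,2}^2 \le s \alpha^2$. -/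
open Finset

/-!
Only the block norms `c i = ‖x i‖` matter. They form a point of the slice of the box
`∏ i, [0, b i]` (with `b i = α` on the support of `x` and `b i = 0` off it) by the hyperplane
`∑ i, c i = ‖x‖_{2,ℐ}`. Every point of such a slice is a convex combination of points of the slice
with at most one fractional coordinate `0 < v i < b i`: while two coordinates `i, j` are
fractional, moving mass from `j` to `i`, or from `i` to `j`, until a coordinate reaches a bound
exhibits the point as a convex combination of two points with fewer fractional coordinates.
Rescaling the blocks of `x` to the norms `v i` gives the atoms `u`. All their nonzero blocks but
at most one have norm `α` and the block norms add up to at most `s α`, so at most `s` blocks are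
nonzero; and `‖u‖² = ∑ i, v i ² ≤ α ∑ i, v i ≤ s α²`.
-/

lemma exists_fin_sum_eq_of_mem_convexHull {R E : Type*} [Field R] [LinearOrder R]
    [IsStrictOrderedRing R] [AddCommGroup E] [Module R E] {s : Set E} {x : E}
    (hx : x ∈ convexHull R s) :
    ∃ (K : ℕ) (w : Fin K → R) (z : Fin K → E),
      (∀ j, 0 ≤ w j) ∧ ∑ j, w j = 1 ∧ (∀ j, z j ∈ s) ∧ ∑ j, w j • z j = x := by
  obtain ⟨ι, _, w, z, hw₀, hw₁, hz, rfl⟩ := mem_convexHull_iff_exists_fintype.mp hx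
  let e := (Fintype.equivFin ι).symm
  exact ⟨_, w ∘ e, z ∘ e, fun _ => hw₀ _, hw₁ ▸ e.sum_comp w, fun _ => hz _,
    e.sum_comp fun i => w i • z i⟩

section BoxSlice

variable {ι : Type*} [Fintype ι]

def boxSlice (b : ι → ℝ) (σ : ℝ) : Set (ι → ℝ) :=
  {v | (∀ i, 0 ≤ v i ∧ v i ≤ b i) ∧ ∑ i, v i = σ}

noncomputable def fractionalCoords (b v : ι → ℝ) : Finset ι :=
  univ.filter fun i => 0 < v i ∧ v i < b i

variable {b v : ι → ℝ} {σ : ℝ}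

lemma sum_sq_le_of_mem_boxSlice {α : ℝ} (hbα : ∀ i, b i ≤ α) (hv : v ∈ boxSlice b σ) :
    ∑ i, v i ^ 2 ≤ α * σ :=
  calc ∑ i, v i ^ 2 ≤ ∑ i, α * v i := sum_le_sum fun i _ => by
        rw [sq]; exact mul_le_mul_of_nonneg_right ((hv.1 i).2.trans (hbα i)) (hv.1 i).1
    _ = α * σ := by rw [← mul_sum, hv.2]

variable [DecidableEq ι]

lemma card_support_le_of_mem_boxSlice {s : ℕ} {α : ℝ} (hα : 0 < α)
    (hb : ∀ i, b i = 0 ∨ b i = α) (hv : v ∈ boxSlice b σ)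
    (hfrac : (fractionalCoords b v).card ≤ 1) (hσ : σ ≤ s * α) :
    (univ.filter fun i => v i ≠ 0).card ≤ s := by
  have hbα : ∀ i, b i ≤ α := fun i => (hb i).elim (fun h => h ▸ hα.le) le_of_eq
  set A := univ.filter fun i => v i = α
  set F := fractionalCoords b v
  have hdisj : Disjoint A F := disjoint_filter.mpr fun i _ hiA hiF =>
    (hiF.2.trans_le (hbα i)).ne hiA
  have hsupp : (univ.filter fun i => v i ≠ 0) ⊆ A ∪ F := by
    intro i hi
    simp only [A, F, fractionalCoords, mem_union, mem_filter, mem_univ, true_and] at hi ⊢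
    have hpos : 0 < v i := lt_of_le_of_ne (hv.1 i).1 (Ne.symm hi)
    rcases (hv.1 i).2.lt_or_eq with hlt | heq
    · exact Or.inr ⟨hpos, hlt⟩
    · rcases hb i with h | h
      · linarith
      · exact Or.inl (heq.trans h)
  have hsum : A.card * α + ∑ i ∈ F, v i ≤ s * α :=
    calc A.card * α + ∑ i ∈ F, v i = ∑ i ∈ A ∪ F, v i := by
          rw [sum_union hdisj, sum_congr rfl fun i hi => (mem_filter.mp hi).2, sum_const,
            nsmul_eq_mul]
      _ ≤ ∑ i, v i := sum_le_sum_of_subset_of_nonneg (subset_univ _) fun i _ _ => (hv.1 i).1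
      _ = σ := hv.2
      _ ≤ s * α := hσ
  have hAF : A.card + F.card ≤ s := by
    rcases F.eq_empty_or_nonempty with hF | hF
    · rw [hF, sum_empty, add_zero] at hsum
      rw [hF, card_empty, add_zero]
      exact_mod_cast le_of_mul_le_mul_right hsum hα
    · have hFpos : 0 < ∑ i ∈ F, v i := sum_pos (fun i hi => (mem_filter.mp hi).2.1) hF
      have hA : (A.card : ℝ) < s := lt_of_mul_lt_mul_right (by linarith) hα.le
      have hA' : A.card < s := by exact_mod_cast hA
      omega
  exact (card_le_card hsupp).trans ((card_union_le _ _).trans hAF)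

lemma exists_transfer_mem_boxSlice (hv : v ∈ boxSlice b σ) {i j : ι} (hij : i ≠ j)
    (hi : i ∈ fractionalCoords b v) (hj : j ∈ fractionalCoords b v) :
    ∃ t : ℝ, 0 < t ∧ v + t • (Pi.single i 1 - Pi.single j 1 : ι → ℝ) ∈ boxSlice b σ ∧
      fractionalCoords b (v + t • (Pi.single i 1 - Pi.single j 1 : ι → ℝ)) ⊂
        fractionalCoords b v := by
  simp only [fractionalCoords, mem_filter, mem_univ, true_and] at hi hj
  set t := min (b i - v i) (v j)
  set w := v + t • (Pi.single i 1 - Pi.single j 1 : ι → ℝ)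
  have hwi : w i = v i + t := by simp [w, hij]
  have hwj : w j = v j - t := by simp [w, hij.symm]; ring
  have hwk : ∀ k, k ≠ i → k ≠ j → w k = v k := fun k hki hkj => by simp [w, hki, hkj]
  have hti : t ≤ b i - v i := min_le_left _ _
  have htj : t ≤ v j := min_le_right _ _
  have ht : 0 < t := lt_min (by linarith) hj.1
  have hsub : fractionalCoords b w ⊆ fractionalCoords b v := by
    intro k hk
    simp only [fractionalCoords, mem_filter, mem_univ, true_and] at hk ⊢
    rcases eq_or_ne k i with rfl | hki
    · exact hi
    rcases eq_or_ne k j with rfl | hkj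
    · exact hj
    · rwa [← hwk k hki hkj]
  have hw : w ∈ boxSlice b σ := by
    refine ⟨fun k => ?_, by simp [w, sum_add_distrib, ← mul_sum, hv.2]⟩
    rcases eq_or_ne k i with rfl | hki
    · rw [hwi]; constructor <;> linarith
    rcases eq_or_ne k j with rfl | hkj
    · rw [hwj]; constructor <;> linarith [hv.1 k]
    · rw [hwk k hki hkj]; exact hv.1 k
  refine ⟨t, ht, hw, (ssubset_iff_of_subset hsub).mpr ?_⟩
  rcases min_choice (b i - v i) (v j) with h | h
  · exact ⟨i, by simp [fractionalCoords, hi], by simp [fractionalCoords, hwi, t, h]⟩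
  · exact ⟨j, by simp [fractionalCoords, hj], by simp [fractionalCoords, hwj, t, h]⟩

theorem boxSlice_subset_convexHull (b : ι → ℝ) (σ : ℝ) :
    boxSlice b σ ⊆ convexHull ℝ (boxSlice b σ ∩ {v | (fractionalCoords b v).card ≤ 1}) := by
  intro v hv
  induction hn : (fractionalCoords b v).card using Nat.strong_induction_on generalizing v with
  | _ n ih =>
  rcases le_or_gt n 1 with hle | hlt
  · exact subset_convexHull ℝ _ ⟨hv, hn.trans_le hle⟩
  obtain ⟨i, hi, j, hj, hij⟩ := one_lt_card.mp (hn ▸ hlt)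
  obtain ⟨t, ht, hwt, hwt_lt⟩ := exists_transfer_mem_boxSlice hv hij hi hj
  obtain ⟨t', ht', hwt', hwt'_lt⟩ := exists_transfer_mem_boxSlice hv hij.symm hj hi
  have hv_eq : v = (t' / (t + t')) • (v + t • (Pi.single i 1 - Pi.single j 1 : ι → ℝ)) +
      (t / (t + t')) • (v + t' • (Pi.single j 1 - Pi.single i 1 : ι → ℝ)) := by
    rw [← neg_sub (Pi.single i 1 : ι → ℝ)]
    match_scalars <;> field_simp <;> ring
  rw [hv_eq]
  exact convex_convexHull ℝ _ (ih _ (hn ▸ card_lt_card hwt_lt) hwt rfl)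
    (ih _ (hn ▸ card_lt_card hwt'_lt) hwt' rfl) (by positivity) (by positivity)
    (by field_simp; ring)

end BoxSlice

section Blocks

variable {l : ℕ} {d : Fin l → ℕ}

noncomputable def blockRescale (x : BlockVec d) : (Fin l → ℝ) →ₗ[ℝ] BlockVec d where
  toFun c := WithLp.toLp 2 fun i => (c i / ‖x i‖) • x i
  map_add' c c' := by ext i : 2; simp [add_div, add_smul]
  map_smul' r c := by ext i : 2; simp [mul_div_assoc, mul_smul]

lemma blockRescale_apply (x : BlockVec d) (c : Fin l → ℝ) (i : Fin l) :
    blockRescale x c i = (c i / ‖x i‖) • x i := rfl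

lemma blockRescale_norm_self (x : BlockVec d) : blockRescale x (fun i => ‖x i‖) = x := by
  ext i : 2
  rw [blockRescale_apply]
  rcases eq_or_ne (x i) 0 with hx | hx
  · simp [hx]
  · rw [div_self (norm_ne_zero_iff.mpr hx), one_smul]

lemma norm_blockRescale_apply {x : BlockVec d} {c : Fin l → ℝ} {i : Fin l} (hc : 0 ≤ c i)
    (hx : x i = 0 → c i = 0) : ‖blockRescale x c i‖ = c i := by
  rw [blockRescale_apply]
  rcases eq_or_ne (x i) 0 with h | h
  · simp [h, hx h]
  · rw [norm_smul, Real.norm_of_nonneg (div_nonneg hc (norm_nonneg _)),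
      div_mul_cancel₀ _ (norm_ne_zero_iff.mpr h)]

noncomputable def blockCaps (α : ℝ) (x : BlockVec d) : Fin l → ℝ :=
  fun i => if x i = 0 then 0 else α

variable {α σ : ℝ} {x : BlockVec d} {v : Fin l → ℝ}

lemma blockCaps_eq_zero_or_eq (α : ℝ) (x : BlockVec d) (i : Fin l) :
    blockCaps α x i = 0 ∨ blockCaps α x i = α := by
  unfold blockCaps; split_ifs <;> simp

lemma blockCaps_le (hα : 0 ≤ α) (i : Fin l) : blockCaps α x i ≤ α :=
  (blockCaps_eq_zero_or_eq α x i).elim (fun h => h ▸ hα) le_of_eq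

lemma blockNorms_mem_boxSlice (hx : ∀ i, ‖x i‖ ≤ α) :
    (fun i => ‖x i‖) ∈ boxSlice (blockCaps α x) (blockL1 x) :=
  ⟨fun i => ⟨norm_nonneg _, by unfold blockCaps; split_ifs with h <;> simp [h, hx]⟩, rfl⟩

lemma norm_blockRescale_apply_of_mem_boxSlice (hv : v ∈ boxSlice (blockCaps α x) σ)
    (i : Fin l) : ‖blockRescale x v i‖ = v i :=
  norm_blockRescale_apply (hv.1 i).1 fun hxi =>
    le_antisymm (by simpa [blockCaps, hxi] using (hv.1 i).2) (hv.1 i).1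

lemma blockL1_blockRescale (hv : v ∈ boxSlice (blockCaps α x) σ) :
    blockL1 (blockRescale x v) = σ := by
  simp only [blockL1, norm_blockRescale_apply_of_mem_boxSlice hv, hv.2]

lemma norm_sq_blockRescale_le (hα : 0 ≤ α) (hv : v ∈ boxSlice (blockCaps α x) σ) :
    ‖blockRescale x v‖ ^ 2 ≤ α * σ := by
  rw [PiLp.norm_sq_eq_of_L2]
  simp only [norm_blockRescale_apply_of_mem_boxSlice hv]
  exact sum_sq_le_of_mem_boxSlice (blockCaps_le hα) hv

lemma blockSparse_blockRescale {s : ℕ} (hα : 0 < α) (hv : v ∈ boxSlice (blockCaps α x) σ)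
    (hfrac : (fractionalCoords (blockCaps α x) v).card ≤ 1) (hσ : σ ≤ s * α) :
    BlockSparse s (blockRescale x v) := by
  refine ⟨_, card_support_le_of_mem_boxSlice hα (blockCaps_eq_zero_or_eq α x) hv hfrac hσ,
    fun i hi => ?_⟩
  rw [blockRescale_apply, show v i = 0 by simpa using hi, zero_div, zero_smul]

end Blocks

theorem block_polytope_convex_decomposition_general {l : ℕ} {d : Fin l → ℕ}
    (α : ℝ) (hα : 0 < α) (s : ℕ) (x : BlockVec d)
    (hinf : ∀ i, ‖x i‖ ≤ α) (hL1 : blockL1 x ≤ s * α) :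
    ∃ (K : ℕ) (lam : Fin K → ℝ) (u : Fin K → BlockVec d),
      x = ∑ j, lam j • u j ∧
      (∀ j, 0 ≤ lam j ∧ lam j ≤ 1) ∧
      (∑ j, lam j = 1) ∧
      (∀ j, BlockSparse s (u j) ∧
        (∀ i, x i = 0 → u j i = 0) ∧
        blockL1 (u j) = blockL1 x ∧
        (∀ i, ‖u j i‖ ≤ α)) ∧
      ∑ j, lam j * ‖u j‖ ^ 2 ≤ s * α ^ 2 := by
  obtain ⟨K, lam, v, hlam, hlam_sum, hv, hv_sum⟩ := exists_fin_sum_eq_of_mem_convexHull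
    (boxSlice_subset_convexHull _ _ (blockNorms_mem_boxSlice hinf))
  refine ⟨K, lam, fun j => blockRescale x (v j), ?_,
    fun j => ⟨hlam j, hlam_sum ▸ single_le_sum (fun j _ => hlam j) (mem_univ j)⟩, hlam_sum,
    fun j => ⟨blockSparse_blockRescale hα (hv j).1 (hv j).2 hL1,
      fun i hxi => by simp [blockRescale_apply, hxi], blockL1_blockRescale (hv j).1,
      fun i => ?_⟩, ?_⟩
  · calc x = blockRescale x (fun i => ‖x i‖) := (blockRescale_norm_self x).symm
      _ = _ := by rw [← hv_sum, map_sum]; simp only [map_smul]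
  · rw [norm_blockRescale_apply_of_mem_boxSlice (hv j).1]
    exact ((hv j).1.1 i).2.trans (blockCaps_le hα.le i)
  · calc ∑ j, lam j * ‖blockRescale x (v j)‖ ^ 2 ≤ ∑ j, lam j * (α * (s * α)) :=
          sum_le_sum fun j _ => mul_le_mul_of_nonneg_left
            ((norm_sq_blockRescale_le hα.le (hv j).1).trans
              (mul_le_mul_of_nonneg_left hL1 hα.le)) (hlam j)
      _ = s * α ^ 2 := by rw [← sum_mul, hlam_sum]; ring

/-- Lemma 2.3, block polytope representation. -/
theorem block_polytope_convex_decomposition {l : ℕ} {d : Fin l → ℕ}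
    (α : ℝ) (hα : 0 < α) (s : ℕ) (hs : 0 < s) (x : BlockVec d)
    (hinf : ∀ i, ‖x i‖ ≤ α) (hL1 : blockL1 x ≤ s * α) :
    ∃ (K : ℕ) (lam : Fin K → ℝ) (u : Fin K → BlockVec d),
      x = ∑ j, lam j • u j ∧
      (∀ j, 0 ≤ lam j ∧ lam j ≤ 1) ∧
      (∑ j, lam j = 1) ∧
      (∀ j, BlockSparse s (u j) ∧
        (∀ i, x i = 0 → u j i = 0) ∧
        blockL1 (u j) = blockL1 x ∧
        (∀ i, ‖u j i‖ ≤ α)) ∧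
      ∑ j, lam j * ‖u j‖ ^ 2 ≤ s * α ^ 2 :=
  block_polytope_convex_decomposition_general α hα s x hinf hL1
end

section
/- Let $\Phi \in \mathbb{R}^{M \times N}$ and let $\kappa \ge 2$ and $s \ge 2$ be integers. Then the block restricted isometry constants of $\Phi$ satisfy $\delta_{\kappa s | \mathcal{I}} \le (2\kappa - 1)\, \delta_{s | \mathcal{I}}$. -/
open Finset

/-- The set of admissible block restricted isometry constants of order `s` for `Φ`:
`δ ≥ 0` such that `(1-δ)‖x‖² ≤ ‖Φx‖² ≤ (1+δ)‖x‖²` for every block `s`-sparse `x`.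
The block RIC `δ_{s|ℐ}` is the least element of this set. -/
def ricSet {l M : ℕ} {d : Fin l → ℕ}
    (Φ : BlockVec d →ₗ[ℝ] EuclideanSpace ℝ (Fin M)) (s : ℕ) : Set ℝ :=
  {δ | 0 ≤ δ ∧ ∀ x : BlockVec d, BlockSparse s x →
    (1 - δ) * ‖x‖ ^ 2 ≤ ‖Φ x‖ ^ 2 ∧ ‖Φ x‖ ^ 2 ≤ (1 + δ) * ‖x‖ ^ 2}

/-!
Let `x` be supported on a set `T` of `n` blocks, with single-block pieces `x_p`, and let
`D y = ‖Φ y‖² - ‖y‖²`, so that `|D y| ≤ δ ‖y‖²` for block `s`-sparse `y`. For every bilinear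
form, hence for `D` and for `‖·‖²`, averaging over the `s`-subsets `W ⊆ T` and over the pairs
`(p, q)` gives, with `K = C(n-1, s-1)` and `L = C(n-2, s-2)`,
`2 s K D x = 2 n ∑_W D x_W - (K - L) ∑_{p,q} D (x_p - x_q)`.
All vectors on the right are `s`-sparse. Bounding each term by `δ` times its squared norm and
evaluating the identity for `‖·‖²`, where orthogonality of the pieces gives
`∑_W ‖x_W‖² = K ‖x‖²`, yields `s |D x| ≤ (2n - s) δ ‖x‖² ≤ (2κ - 1) s δ ‖x‖²`.
Cancelling the diagonal terms with the pairs `x_p - x_q`, rather than with the single pieces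
`x_p`, is what keeps the constant at `2κ - 1`.
-/

open scoped RealInnerProductSpace

section Averaging

variable {α : Type*}

theorem sum_powersetCard_sum_sum [DecidableEq α] {M : Type*} [AddCommMonoid M] (T : Finset α)
    {s : ℕ} (hs : 2 ≤ s) (f : α → α → M) :
    ∑ W ∈ T.powersetCard s, ∑ p ∈ W, ∑ q ∈ W, f p q =
      (#T - 1).choose (s - 1) • ∑ p ∈ T, f p p +
        (#T - 2).choose (s - 2) • ∑ p ∈ T, ∑ q ∈ T.erase p, f p q := by
  set c : α → α → ℕ := fun p q => #{W ∈ T.powersetCard s | {p, q} ⊆ W}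
  have hc_diag : ∀ p ∈ T, c p p = (#T - 1).choose (s - 1) := fun p hp => by
    simpa [c] using card_filter_powersetCard_subset {p} T s (by simpa) (by simp; omega)
  have hc_pair : ∀ p ∈ T, ∀ q ∈ T.erase p, c p q = (#T - 2).choose (s - 2) := fun p hp q hq => by
    have hqp : q ≠ p := (mem_erase.1 hq).1
    have hcard : #({p, q} : Finset α) = 2 := card_pair hqp.symm
    simpa [c, hcard] using card_filter_powersetCard_subset {p, q} T s
      (insert_subset hp (singleton_subset_iff.2 (mem_of_mem_erase hq))) (by omega)
  calc ∑ W ∈ T.powersetCard s, ∑ p ∈ W, ∑ q ∈ W, f p q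
      = ∑ W ∈ T.powersetCard s, ∑ pq ∈ W ×ˢ W, f pq.1 pq.2 := by
        simp only [sum_product]
    _ = ∑ pq ∈ T ×ˢ T, ∑ _W ∈ T.powersetCard s with {pq.1, pq.2} ⊆ _W, f pq.1 pq.2 := by
        refine sum_comm' fun W pq => ?_
        simp only [mem_product, mem_filter, mem_powersetCard, insert_subset_iff,
          singleton_subset_iff]
        constructor
        · rintro ⟨⟨hWT, hW⟩, hp, hq⟩
          exact ⟨⟨⟨hWT, hW⟩, hp, hq⟩, hWT hp, hWT hq⟩
        · rintro ⟨⟨⟨hWT, hW⟩, hp, hq⟩, -⟩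
          exact ⟨⟨hWT, hW⟩, hp, hq⟩
    _ = ∑ p ∈ T, ∑ q ∈ T, c p q • f p q := by
        simp only [sum_const, sum_product, c]
    _ = ∑ p ∈ T, ((#T - 1).choose (s - 1) • f p p +
          (#T - 2).choose (s - 2) • ∑ q ∈ T.erase p, f p q) := by
        refine sum_congr rfl fun p hp => ?_
        rw [← add_sum_erase _ _ hp, hc_diag p hp, smul_sum]
        exact congrArg _ (sum_congr rfl fun q hq => by rw [hc_pair p hp q hq])
    _ = _ := by
        rw [sum_add_distrib, smul_sum, smul_sum]

theorem sub_one_mul_choose_sub_two {n s : ℕ} (hs : 2 ≤ s) (hsn : s ≤ n) :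
    ((n : ℝ) - 1) * (n - 2).choose (s - 2) = ((s : ℝ) - 1) * (n - 1).choose (s - 1) := by
  obtain ⟨m, rfl⟩ : ∃ m, n = m + 2 := ⟨n - 2, by omega⟩
  obtain ⟨k, rfl⟩ : ∃ k, s = k + 2 := ⟨s - 2, by omega⟩
  have h := Nat.add_one_mul_choose_eq m k
  have h' : ((m : ℝ) + 1) * m.choose k = (m + 1).choose (k + 1) * ((k : ℝ) + 1) := by
    exact_mod_cast h
  simp only [Nat.add_sub_cancel, show m + 2 - 1 = m + 1 by omega, show k + 2 - 1 = k + 1 by omega]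
  push_cast
  linear_combination h'

theorem choose_sub_two_le_choose_sub_one {n : ℕ} (hn : 2 ≤ n) (s : ℕ) :
    (n - 2).choose (s - 2) ≤ (n - 1).choose (s - 1) := by
  obtain ⟨m, rfl⟩ : ∃ m, n = m + 2 := ⟨n - 2, by omega⟩
  rw [Nat.add_sub_cancel, show m + 2 - 1 = m + 1 by omega]
  rcases s with _ | _ | k
  · simp
  · simp
  · simp [Nat.choose_succ_succ]

variable {E : Type*} [AddCommGroup E] [Module ℝ E]

theorem LinearMap.BilinForm.apply_sum_sum (β : LinearMap.BilinForm ℝ E) (v : α → E)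
    (W : Finset α) : β (∑ p ∈ W, v p) (∑ p ∈ W, v p) = ∑ p ∈ W, ∑ q ∈ W, β (v p) (v q) := by
  simp only [map_sum, LinearMap.sum_apply]
  exact sum_comm

theorem LinearMap.BilinForm.sum_apply_sub_sub (β : LinearMap.BilinForm ℝ E) (v : α → E)
    (T : Finset α) :
    ∑ p ∈ T, ∑ q ∈ T, β (v p - v q) (v p - v q) =
      2 * #T * ∑ p ∈ T, β (v p) (v p) - 2 * β (∑ p ∈ T, v p) (∑ p ∈ T, v p) := by
  simp only [map_sub, LinearMap.sub_apply, sum_sub_distrib, β.apply_sum_sum, sum_const,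
    nsmul_eq_mul]
  rw [← mul_sum, sum_comm (f := fun p q => β (v q) (v p))]
  ring

theorem LinearMap.BilinForm.sum_powersetCard_polarization [DecidableEq α]
    (β : LinearMap.BilinForm ℝ E) (v : α → E) (T : Finset α) {s : ℕ} (hs : 2 ≤ s) (hsT : s ≤ #T) :
    2 * s * (#T - 1).choose (s - 1) * β (∑ p ∈ T, v p) (∑ p ∈ T, v p) =
      2 * #T * ∑ W ∈ T.powersetCard s, β (∑ p ∈ W, v p) (∑ p ∈ W, v p) -
        ((#T - 1).choose (s - 1) - (#T - 2).choose (s - 2) : ℝ) *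
          ∑ p ∈ T, ∑ q ∈ T, β (v p - v q) (v p - v q) := by
  have hsubsets := sum_powersetCard_sum_sum T hs fun p q => β (v p) (v q)
  simp only [nsmul_eq_mul] at hsubsets
  have hoff : ∑ p ∈ T, ∑ q ∈ T.erase p, β (v p) (v q) =
      β (∑ p ∈ T, v p) (∑ p ∈ T, v p) - ∑ p ∈ T, β (v p) (v p) := by
    rw [β.apply_sum_sum, ← sum_sub_distrib]
    exact sum_congr rfl fun p hp => sum_erase_eq_sub hp
  rw [sum_congr rfl fun W _ => β.apply_sum_sum v W, hsubsets, hoff, β.sum_apply_sub_sub]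
  linear_combination (-2 * β (∑ p ∈ T, v p) (∑ p ∈ T, v p)) * sub_one_mul_choose_sub_two hs hsT

end Averaging

section Orthogonal

variable {α E : Type*} [NormedAddCommGroup E] [InnerProductSpace ℝ E]

theorem norm_sum_sq_eq_sum_sum_inner (v : α → E) (W : Finset α) :
    ‖∑ p ∈ W, v p‖ ^ 2 = ∑ p ∈ W, ∑ q ∈ W, ⟪v p, v q⟫ := by
  simp only [← real_inner_self_eq_norm_sq, sum_inner, inner_sum]
  exact sum_comm

theorem norm_sum_sq_of_pairwise_inner_eq_zero {v : α → E}
    (hv : Pairwise fun p q => ⟪v p, v q⟫ = 0) (W : Finset α) :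
    ‖∑ p ∈ W, v p‖ ^ 2 = ∑ p ∈ W, ‖v p‖ ^ 2 := by
  rw [norm_sum_sq_eq_sum_sum_inner]
  refine sum_congr rfl fun p hp => ?_
  rw [sum_eq_single p (fun q _ hqp => hv hqp.symm) (absurd hp), real_inner_self_eq_norm_sq]

theorem sum_powersetCard_norm_sum_sq [DecidableEq α] {v : α → E}
    (hv : Pairwise fun p q => ⟪v p, v q⟫ = 0) (T : Finset α) {s : ℕ} (hs : 2 ≤ s) :
    ∑ W ∈ T.powersetCard s, ‖∑ p ∈ W, v p‖ ^ 2 = (#T - 1).choose (s - 1) * ‖∑ p ∈ T, v p‖ ^ 2 := by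
  have hoff : ∀ p ∈ T, ∑ q ∈ T.erase p, ⟪v p, v q⟫ = 0 := fun p _ =>
    sum_eq_zero fun q hq => hv (ne_of_mem_erase hq).symm
  rw [sum_congr rfl fun W _ => norm_sum_sq_eq_sum_sum_inner v W, sum_powersetCard_sum_sum T hs,
    sum_congr rfl hoff, norm_sum_sq_of_pairwise_inner_eq_zero hv]
  simp

end Orthogonal

section Block

variable {l M : ℕ} {d : Fin l → ℕ}

theorem blockRestrict_eq_sum (x : BlockVec d) (W : Finset (Fin l)) :
    blockRestrict x W = ∑ p ∈ W, blockRestrict x {p} := by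
  ext i : 1
  simp [blockRestrict, WithLp.ofLp_sum, Finset.sum_apply]

theorem sum_blockRestrict_singleton {x : BlockVec d} {T : Finset (Fin l)}
    (hx : ∀ i ∉ T, x i = 0) : ∑ p ∈ T, blockRestrict x {p} = x := by
  rw [← blockRestrict_eq_sum]
  ext i : 1
  by_cases hi : i ∈ T <;> simp [blockRestrict, hi, hx i]

theorem inner_blockRestrict_singleton (x : BlockVec d) :
    Pairwise fun p q : Fin l => ⟪blockRestrict x {p}, blockRestrict x {q}⟫ = 0 := by
  intro p q hpq
  rw [PiLp.inner_apply]
  refine sum_eq_zero fun i _ => ?_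
  by_cases hi : i = p
  · subst hi
    simp [blockRestrict, hpq]
  · simp [blockRestrict, hi]

theorem blockSparse_blockRestrict (x : BlockVec d) {W : Finset (Fin l)} {s : ℕ}
    (hW : #W ≤ s) : BlockSparse s (blockRestrict x W) :=
  ⟨W, hW, fun i hi => by simp [blockRestrict, hi]⟩

theorem blockSparse_blockRestrict_singleton_sub (x : BlockVec d) (p q : Fin l) {s : ℕ}
    (hs : 2 ≤ s) : BlockSparse s (blockRestrict x {p} - blockRestrict x {q}) := by
  refine ⟨{p, q}, card_le_two.trans hs, fun i hi => ?_⟩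
  simp only [mem_insert, mem_singleton, not_or] at hi
  simp [blockRestrict, hi.1, hi.2]

theorem mem_ricSet_iff (Φ : BlockVec d →ₗ[ℝ] EuclideanSpace ℝ (Fin M)) (s : ℕ) (δ : ℝ) :
    δ ∈ ricSet Φ s ↔
      0 ≤ δ ∧ ∀ x, BlockSparse s x → |‖Φ x‖ ^ 2 - ‖x‖ ^ 2| ≤ δ * ‖x‖ ^ 2 := by
  refine and_congr_right fun _ => forall₂_congr fun x _ => ?_
  rw [abs_sub_le_iff]
  constructor <;> rintro ⟨h₁, h₂⟩ <;> constructor <;> linarith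

theorem abs_sum_sub_le_of_mem_ricSet
    {Φ : BlockVec d →ₗ[ℝ] EuclideanSpace ℝ (Fin M)} {s : ℕ} {δ : ℝ} (hδ : δ ∈ ricSet Φ s)
    {ι : Type*} (I : Finset ι) {y : ι → BlockVec d} (hy : ∀ i ∈ I, BlockSparse s (y i)) :
    |∑ i ∈ I, (‖Φ (y i)‖ ^ 2 - ‖y i‖ ^ 2)| ≤ δ * ∑ i ∈ I, ‖y i‖ ^ 2 := by
  rw [mul_sum]
  exact (abs_sum_le_sum_abs _ _).trans
    (sum_le_sum fun i hi => ((mem_ricSet_iff Φ s δ).1 hδ).2 _ (hy i hi))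

theorem mul_abs_sub_le_of_mem_ricSet
    (Φ : BlockVec d →ₗ[ℝ] EuclideanSpace ℝ (Fin M)) {s : ℕ} {δ : ℝ} (hδ : δ ∈ ricSet Φ s)
    (hs : 2 ≤ s) {x : BlockVec d} {T : Finset (Fin l)} (hsT : s ≤ #T) (hx : ∀ i ∉ T, x i = 0) :
    s * |‖Φ x‖ ^ 2 - ‖x‖ ^ 2| ≤ (2 * #T - s) * δ * ‖x‖ ^ 2 := by
  set v : Fin l → BlockVec d := fun p => blockRestrict x {p}
  set β : LinearMap.BilinForm ℝ (BlockVec d) := (innerₗ _).compl₁₂ Φ Φ - innerₗ _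
  have hβ : ∀ y, β y y = ‖Φ y‖ ^ 2 - ‖y‖ ^ 2 := fun y => by simp [β]
  have hdev := β.sum_powersetCard_polarization v T hs hsT
  have hnorm := LinearMap.BilinForm.sum_powersetCard_polarization (innerₗ _) v T hs hsT
  have hsubsets := sum_powersetCard_norm_sum_sq (inner_blockRestrict_singleton x) T hs
  simp only [hβ, innerₗ_apply_apply, real_inner_self_eq_norm_sq, v, sum_blockRestrict_singleton hx,
    ← blockRestrict_eq_sum] at hdev hnorm hsubsets
  rw [← sum_product'] at hdev hnorm
  set K : ℝ := ↑((#T - 1).choose (s - 1))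
  set L : ℝ := ↑((#T - 2).choose (s - 2))
  set A := ∑ W ∈ T.powersetCard s, (‖Φ (blockRestrict x W)‖ ^ 2 - ‖blockRestrict x W‖ ^ 2)
  set A' := ∑ W ∈ T.powersetCard s, ‖blockRestrict x W‖ ^ 2
  set P := ∑ pq ∈ T ×ˢ T, (‖Φ (blockRestrict x {pq.1} - blockRestrict x {pq.2})‖ ^ 2 -
    ‖blockRestrict x {pq.1} - blockRestrict x {pq.2}‖ ^ 2)
  set P' := ∑ pq ∈ T ×ˢ T, ‖blockRestrict x {pq.1} - blockRestrict x {pq.2}‖ ^ 2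
  have hA : |A| ≤ δ * A' := abs_sum_sub_le_of_mem_ricSet hδ _ fun W hW =>
    blockSparse_blockRestrict x (mem_powersetCard.1 hW).2.le
  have hP : |P| ≤ δ * P' := abs_sum_sub_le_of_mem_ricSet hδ _ fun pq _ =>
    blockSparse_blockRestrict_singleton_sub x pq.1 pq.2 hs
  have hLK : L ≤ K := Nat.cast_le.2 (choose_sub_two_le_choose_sub_one (hs.trans hsT) s)
  have hK : 0 < K := Nat.cast_pos.2 (Nat.choose_pos (by omega))
  refine le_of_mul_le_mul_left ?_ (by positivity : (0 : ℝ) < 2 * K)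
  calc 2 * K * (s * |‖Φ x‖ ^ 2 - ‖x‖ ^ 2|)
      = |2 * #T * A - (K - L) * P| := by
        rw [← hdev, abs_mul, abs_of_pos (by positivity : (0 : ℝ) < 2 * s * K)]
        ring
    _ ≤ 2 * #T * |A| + (K - L) * |P| := by
        refine (abs_sub _ _).trans_eq ?_
        simp only [abs_mul, abs_two, Nat.abs_cast, abs_of_nonneg (sub_nonneg.2 hLK)]
    _ ≤ 2 * #T * (δ * A') + (K - L) * (δ * P') := by
        gcongr
    _ = 2 * K * ((2 * #T - s) * δ * ‖x‖ ^ 2) := by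
        linear_combination δ * hnorm + 4 * #T * δ * hsubsets

theorem mul_mem_ricSet (Φ : BlockVec d →ₗ[ℝ] EuclideanSpace ℝ (Fin M))
    {κ s : ℕ} (hκ : 1 ≤ κ) (hs : 2 ≤ s) {δ : ℝ} (hδ : δ ∈ ricSet Φ s) :
    (2 * κ - 1) * δ ∈ ricSet Φ (κ * s) := by
  obtain ⟨hδ0, hRIP⟩ := (mem_ricSet_iff Φ s δ).1 hδ
  have hκ' : (1 : ℝ) ≤ κ := by exact_mod_cast hκ
  refine (mem_ricSet_iff Φ _ _).2 ⟨mul_nonneg (by linarith) hδ0, fun x ⟨T, hTκs, hx⟩ => ?_⟩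
  rcases le_or_gt #T s with hTs | hsT
  · calc |‖Φ x‖ ^ 2 - ‖x‖ ^ 2| ≤ δ * ‖x‖ ^ 2 := hRIP x ⟨T, hTs, hx⟩
      _ ≤ (2 * κ - 1) * δ * ‖x‖ ^ 2 := by
        rw [mul_assoc]
        exact le_mul_of_one_le_left (by positivity) (by linarith)
  · have hTκs' : (#T : ℝ) ≤ κ * s := by exact_mod_cast hTκs
    have hs' : (0 : ℝ) < s := by positivity
    refine le_of_mul_le_mul_left ?_ hs'
    calc s * |‖Φ x‖ ^ 2 - ‖x‖ ^ 2| ≤ (2 * #T - s) * δ * ‖x‖ ^ 2 :=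
          mul_abs_sub_le_of_mem_ricSet Φ hδ hs hsT.le hx
      _ ≤ s * ((2 * κ - 1) * δ * ‖x‖ ^ 2) := by
        have hcoef : 2 * (#T : ℝ) - s ≤ s * (2 * κ - 1) := by linarith
        have := mul_le_mul_of_nonneg_right hcoef (by positivity : 0 ≤ δ * ‖x‖ ^ 2)
        linarith

end Block

/-- Lemma 2.4: `δ_{κs|ℐ} ≤ (2κ-1) δ_{s|ℐ}` for integers `κ ≥ 2`, `s ≥ 2`. -/
theorem blockRIC_mul_le {l M : ℕ} {d : Fin l → ℕ}
    (Φ : BlockVec d →ₗ[ℝ] EuclideanSpace ℝ (Fin M))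
    (κ s : ℕ) (hκ : 2 ≤ κ) (hs : 2 ≤ s) (δs δκs : ℝ)
    (h1 : IsLeast (ricSet Φ s) δs) (h2 : IsLeast (ricSet Φ (κ * s)) δκs) :
    δκs ≤ (2 * (κ : ℝ) - 1) * δs :=
  h2.2 (mul_mem_ricSet Φ (by omega) hs h1.1)
end

section
/- Let $a_1 \ge a_2 \ge \cdots \ge a_l \ge 0$ be real numbers with $\sum_{i=1}^s a_i \ge \sum_{i=s+1}^l a_i$ for some $s \le l$. Then for every real $\alpha \ge 1$, $\sum_{i=s+1}^l a_i^{\alpha} \le \sum_{i=1}^s a_i^{\alpha}$. -/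
open Finset

/-- Lemma A.1, first part; Cai–Zhang Lemma 5.3: for a nonincreasing
nonnegative sequence `a 1 ≥ ⋯ ≥ a l ≥ 0` with `∑_{i=1}^s a i ≥ ∑_{i=s+1}^l a i`,
one has `∑_{i=s+1}^l (a i)^α ≤ ∑_{i=1}^s (a i)^α` for every real `α ≥ 1`. -/
theorem tail_rpow_sum_le_head_rpow_sum (l s : ℕ) (hs : s ≤ l) (a : ℕ → ℝ)
    (hmono : ∀ i, 1 ≤ i → i < l → a (i + 1) ≤ a i)
    (hnonneg : ∀ i, 1 ≤ i → i ≤ l → 0 ≤ a i)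
    (hsum : ∑ i ∈ Finset.Icc (s + 1) l, a i ≤ ∑ i ∈ Finset.Icc 1 s, a i)
    (α : ℝ) (hα : 1 ≤ α) :
    ∑ i ∈ Finset.Icc (s + 1) l, a i ^ α ≤ ∑ i ∈ Finset.Icc 1 s, a i ^ α := by
  have chain : ∀ i j : ℕ, 1 ≤ i → i ≤ j → j ≤ l → a j ≤ a i := by
    intro i j hi hij
    induction j with
    | zero => omega
    | succ n ih =>
      intro hnl
      rcases Nat.lt_or_ge i (n+1) with h | h
      · have h1 : a (n + 1) ≤ a n := hmono n (by omega) (by omega)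
        exact h1.trans (ih (by omega) (by omega))
      · have : i = n + 1 := by omega
        simp [this]
  rcases eq_or_lt_of_le hs with rfl | hsl
  · simp only [Finset.Icc_eq_empty (by omega : ¬ s + 1 ≤ s), Finset.sum_empty]
    exact Finset.sum_nonneg fun i hi => by
      have := Finset.mem_Icc.mp hi
      exact Real.rpow_nonneg (hnonneg i this.1 this.2) α
  · set M := a (s + 1) with hM
    have hM0 : 0 ≤ M := hnonneg (s+1) (by omega) (by omega)
    have hα1 : (0:ℝ) ≤ α - 1 := by linarith
    have step1 : ∑ i ∈ Finset.Icc (s + 1) l, a i ^ α ≤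
        ∑ i ∈ Finset.Icc (s + 1) l, M ^ (α - 1) * a i := by
      apply Finset.sum_le_sum
      intro i hi
      have hi' := Finset.mem_Icc.mp hi
      have hai0 : 0 ≤ a i := hnonneg i (by omega) hi'.2
      have haiM : a i ≤ M := chain (s+1) i (by omega) hi'.1 hi'.2
      have key : a i ^ α = a i ^ (α - 1) * a i := by
        have h := Real.rpow_add_of_nonneg hai0 hα1 zero_le_one
        have h2 : α - 1 + 1 = α := by ring
        rw [h2, Real.rpow_one] at h
        exact h
      calc a i ^ α = a i ^ (α - 1) * a i := key
        _ ≤ M ^ (α - 1) * a i :=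
            mul_le_mul_of_nonneg_right (Real.rpow_le_rpow hai0 haiM hα1) hai0
    have step2 : ∑ i ∈ Finset.Icc (s + 1) l, M ^ (α - 1) * a i ≤
        ∑ i ∈ Finset.Icc 1 s, M ^ (α - 1) * a i := by
      rw [← Finset.mul_sum, ← Finset.mul_sum]
      exact mul_le_mul_of_nonneg_left hsum (Real.rpow_nonneg hM0 _)
    have step3 : ∑ i ∈ Finset.Icc 1 s, M ^ (α - 1) * a i ≤
        ∑ i ∈ Finset.Icc 1 s, a i ^ α := by
      apply Finset.sum_le_sum
      intro i hi
      have hi' := Finset.mem_Icc.mp hi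
      have hai0 : 0 ≤ a i := hnonneg i hi'.1 (by omega)
      have hMai : M ≤ a i := chain i (s+1) hi'.1 (by omega) (by omega)
      calc M ^ (α - 1) * a i ≤ a i ^ (α - 1) * a i :=
            mul_le_mul_of_nonneg_right (Real.rpow_le_rpow hM0 hMai hα1) hai0
        _ = a i ^ α := by
            have h := Real.rpow_add_of_nonneg hai0 hα1 zero_le_one
            have h2 : α - 1 + 1 = α := by ring
            rw [h2, Real.rpow_one] at h
            exact h.symm
    linarith
end

section
/- Let $a_1 \ge a_2 \ge \cdots \ge a_l \ge 0$ and $\psi \ge 0$ satisfy $\sum_{i=1}^s a_i \ge \sum_{i=s+1}^l a_i - \psi$ for some positive integer $s \le l$. Then for every real $\alpha \ge 1$, $\sum_{i=s+1}^l a_i^{\alpha} \le s \left( \left(\frac{\sum_{i=1}^s a_i^{\alpha}}{s}\right)^{1/\alpha} + \frac{\psi}{s} \right)^{\alpha}$. -/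
/-!
Put `m = ((∑_{i ≤ s} a_i^α) / s)^{1/α}`, the power mean of the head. Every tail term is at
most every head term, hence at most `m`, so `a_i^α ≤ m^{α-1} a_i` on the tail. The power-mean
inequality bounds the head sum by `s m`, so the slack hypothesis gives
`∑_{tail} a_i ≤ s (m + ψ/s)`, and `m^{α-1} ≤ (m + ψ/s)^{α-1}` finishes the estimate.
-/

open Finset

namespace Real

variable {ι : Type*} {x y p : ℝ}

lemma rpow_sub_one_mul_self (hx : 0 ≤ x) (hp : p ≠ 0) : x ^ (p - 1) * x = x ^ p := by
  rw [← rpow_add_one' hx (by simpa using hp), sub_add_cancel]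

lemma rpow_sub_one_mul_le_rpow (hx : 0 ≤ x) (hxy : x ≤ y) (hp : 1 ≤ p) :
    x ^ (p - 1) * y ≤ y ^ p :=
  calc x ^ (p - 1) * y ≤ y ^ (p - 1) * y :=
        mul_le_mul_of_nonneg_right (rpow_le_rpow hx hxy (by linarith)) (hx.trans hxy)
    _ = y ^ p := rpow_sub_one_mul_self (hx.trans hxy) (by linarith)

lemma sum_rpow_le_rpow_sub_one_mul_sum {t : Finset ι} {f : ι → ℝ} {m : ℝ}
    (hf : ∀ i ∈ t, 0 ≤ f i ∧ f i ≤ m) (hp : 1 ≤ p) :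
    ∑ i ∈ t, f i ^ p ≤ m ^ (p - 1) * ∑ i ∈ t, f i := by
  rw [mul_sum]
  refine sum_le_sum fun i hi => ?_
  obtain ⟨hfi, hfim⟩ := hf i hi
  calc f i ^ p = f i ^ (p - 1) * f i := (rpow_sub_one_mul_self hfi (by linarith)).symm
    _ ≤ m ^ (p - 1) * f i := mul_le_mul_of_nonneg_right (rpow_le_rpow hfi hfim (by linarith)) hfi

lemma le_rpow_mean_of_forall_le {t : Finset ι} {f : ι → ℝ} (ht : t.Nonempty) (hx : 0 ≤ x)
    (hxf : ∀ i ∈ t, x ≤ f i) (hp : 0 < p) :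
    x ≤ ((∑ i ∈ t, f i ^ p) / #t) ^ (1 / p) := by
  have hcard : (0 : ℝ) < #t := by exact_mod_cast ht.card_pos
  have hsum : #t • x ^ p ≤ ∑ i ∈ t, f i ^ p :=
    card_nsmul_le_sum _ _ _ fun i hi => by gcongr; exact hxf i hi
  rw [one_div, le_rpow_inv_iff_of_pos hx
    (div_nonneg (sum_nonneg fun i hi => rpow_nonneg (hx.trans (hxf i hi)) p) hcard.le) hp,
    le_div_iff₀ hcard, mul_comm, ← nsmul_eq_mul]
  exact hsum

lemma sum_le_card_mul_rpow_mean (t : Finset ι) {f : ι → ℝ} (hf : ∀ i ∈ t, 0 ≤ f i)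
    (hp : 1 ≤ p) :
    ∑ i ∈ t, f i ≤ #t * ((∑ i ∈ t, f i ^ p) / #t) ^ (1 / p) := by
  obtain rfl | ht := t.eq_empty_or_nonempty
  · simp
  have hcard : (0 : ℝ) < #t := by exact_mod_cast ht.card_pos
  have hmean := arith_mean_le_rpow_mean t (fun _ => 1 / (#t : ℝ)) f (fun _ _ => by positivity)
    (by simp [hcard.ne']) hf hp
  rw [← mul_sum, ← mul_sum, one_div_mul_eq_div, one_div_mul_eq_div] at hmean
  rwa [← div_le_iff₀' hcard]

end Real

/-- Lemma A.1, general part; Cai–Zhang Lemma 5.3: nonincreasing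
nonnegative sequence with slack `ψ ≥ 0`: if `∑_{i=1}^s a i ≥ ∑_{i=s+1}^l a i - ψ`, then
`∑_{i=s+1}^l (a i)^α ≤ s ⬝ ( ((∑_{i=1}^s (a i)^α)/s)^{1/α} + ψ/s )^α` for real `α ≥ 1`. -/
theorem tail_rpow_sum_le_of_slack (l s : ℕ) (hs : 1 ≤ s) (hsl : s ≤ l) (a : ℕ → ℝ)
    (ψ : ℝ) (hψ : 0 ≤ ψ)
    (hmono : ∀ i, 1 ≤ i → i < l → a (i + 1) ≤ a i)
    (hnonneg : ∀ i, 1 ≤ i → i ≤ l → 0 ≤ a i)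
    (hsum : ∑ i ∈ Finset.Icc (s + 1) l, a i - ψ ≤ ∑ i ∈ Finset.Icc 1 s, a i)
    (α : ℝ) (hα : 1 ≤ α) :
    ∑ i ∈ Finset.Icc (s + 1) l, a i ^ α ≤
      s * (((∑ i ∈ Finset.Icc 1 s, a i ^ α) / s) ^ (1 / α) + ψ / s) ^ α := by
  have hs0 : (0 : ℝ) < s := by exact_mod_cast hs
  have hanti : AntitoneOn a (Set.Icc 1 l) :=
    antitoneOn_of_succ_le Set.ordConnected_Icc fun i _ hi hi' =>
      hmono i hi.1 (Nat.succ_le_iff.1 hi'.2)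
  have hhead : ∀ i ∈ Icc 1 s, 0 ≤ a i := fun i hi =>
    hnonneg i (mem_Icc.1 hi).1 ((mem_Icc.1 hi).2.trans hsl)
  set m := ((∑ i ∈ Icc 1 s, a i ^ α) / s) ^ (1 / α)
  have hm : 0 ≤ m := Real.rpow_nonneg (div_nonneg (sum_nonneg fun i hi =>
    Real.rpow_nonneg (hhead i hi) α) hs0.le) _
  have htail : ∀ i ∈ Icc (s + 1) l, 0 ≤ a i ∧ a i ≤ m := by
    intro i hi
    obtain ⟨his, hil⟩ := mem_Icc.1 hi
    have hai := hnonneg i (by omega) hil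
    have hle_head : ∀ j ∈ Icc 1 s, a i ≤ a j := fun j hj => by
      obtain ⟨h1j, hjs⟩ := mem_Icc.1 hj
      exact hanti ⟨h1j, by omega⟩ ⟨by omega, hil⟩ (by omega)
    refine ⟨hai, ?_⟩
    simpa only [Nat.card_Icc, add_tsub_cancel_right] using
      Real.le_rpow_mean_of_forall_le (nonempty_Icc.2 hs) hai hle_head (by linarith)
  have hhead_sum : ∑ i ∈ Icc 1 s, a i ≤ s * m := by
    simpa only [Nat.card_Icc, add_tsub_cancel_right] using
      Real.sum_le_card_mul_rpow_mean (Icc 1 s) hhead hα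
  calc ∑ i ∈ Icc (s + 1) l, a i ^ α ≤ m ^ (α - 1) * ∑ i ∈ Icc (s + 1) l, a i :=
        Real.sum_rpow_le_rpow_sub_one_mul_sum htail hα
    _ ≤ m ^ (α - 1) * (s * (m + ψ / s)) := by
        gcongr
        rw [mul_add, mul_div_cancel₀ _ hs0.ne']
        linarith
    _ = s * (m ^ (α - 1) * (m + ψ / s)) := by ring
    _ ≤ s * (m + ψ / s) ^ α := by
        gcongr
        exact Real.rpow_sub_one_mul_le_rpow hm (le_add_of_nonneg_right (div_nonneg hψ hs0.le)) hα
end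

section
/- (Sharpness construction, RIC bound.) Fix block length $d$, integers $s \ge 1$ and $l > 2s$, and $0 < t < 4/3$. Let $x_1 = (2sd)^{-1/2}[1,\dots,1,0,\dots,0]^T \in \mathbb{R}^N$ with ones in the first $2s$ blocks of size $d$, so $\|x_1\|_2 = 1$. Define $\Phi : \mathbb{R}^N \to \mathbb{R}^N$ by $\Phi x = (1 - t/4)^{-1/2}(x - \langle x_1, x \rangle x_1)$. Then for every $\varepsilon$ with $\varepsilon s > 1$ and every block $\lfloor ts \rfloor$-sparse $x$, $\left(1 - \tfrac{t}{4-t} - \varepsilon\right)\|x\|_2^2 < \|\Phi x\|_2^2 \le \left(1 + \tfrac{t}{4-t} + \varepsilon\right)\|x\|_2^2$; in particular $\delta_{ts|\mathcal{I}} < \frac{t}{4-t} + \varepsilon$. -/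
/-!
Because `x₁` is a unit vector, `‖Φ x‖² = (1 - t/4)⁻¹ (‖x‖² - ⟨x₁, x⟩²)`. Every block of `x₁` has
squared norm at most `1/(2s)`, so if `x` lives on a set `S` of at most `⌊ts⌋` blocks, Cauchy–Schwarz
against the restriction of `x₁` to `S` gives `⟨x₁, x⟩² ≤ (t/2) ‖x‖²`. Hence `‖Φ x‖² / ‖x‖²` lies in
`[(1 - t/2)/(1 - t/4), 1/(1 - t/4)] = [1 - t/(4-t), 1 + t/(4-t)]`, and `ε ‖x‖² > 0` gives the slack.
-/

open Finset

/-- The unit vector `x₁ = (2sd)^{-1/2}(1,…,1,0,…,0)ᵀ`, with ones filling the first `2s`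
blocks (each of size `dsize`). -/
noncomputable def x1Vec {l : ℕ} (s dsize : ℕ) (d : Fin l → ℕ) : BlockVec d :=
  WithLp.toLp 2 (fun i : Fin l => WithLp.toLp 2 (fun _ : Fin (d i) =>
    if (i : ℕ) < 2 * s then (Real.sqrt (2 * s * dsize))⁻¹ else 0))

/-- The linear transformation `Φ x = (1 - t/4)^{-1/2} (x - ⟨x₁, x⟩ x₁)`. -/
noncomputable def PhiMap {l : ℕ} {d : Fin l → ℕ} (t : ℝ) (x1 : BlockVec d)
    (x : BlockVec d) : BlockVec d :=
  (Real.sqrt (1 - t / 4))⁻¹ • (x - (inner ℝ x1 x : ℝ) • x1)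

open scoped RealInnerProductSpace

theorem norm_sub_inner_smul_sq {E : Type*} [NormedAddCommGroup E] [InnerProductSpace ℝ E]
    {u : E} (hu : ‖u‖ = 1) (x : E) : ‖x - ⟪u, x⟫ • u‖ ^ 2 = ‖x‖ ^ 2 - ⟪u, x⟫ ^ 2 := by
  rw [norm_sub_sq_real, real_inner_smul_right, norm_smul, mul_pow, hu, real_inner_comm,
    Real.norm_eq_abs, sq_abs]
  ring

section BlockVec

variable {l : ℕ} {d : Fin l → ℕ}

theorem norm_PhiMap_sq {t : ℝ} (ht : t < 4) {u : BlockVec d} (hu : ‖u‖ = 1) (x : BlockVec d) :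
    ‖PhiMap t u x‖ ^ 2 = (1 - t / 4)⁻¹ * (‖x‖ ^ 2 - ⟪u, x⟫ ^ 2) := by
  rw [PhiMap, norm_smul, mul_pow, norm_sub_inner_smul_sq hu, norm_inv, Real.norm_eq_abs,
    abs_of_nonneg (Real.sqrt_nonneg _), inv_pow, Real.sq_sqrt (by linarith)]

theorem inner_blockRestrict_of_support (u : BlockVec d) {x : BlockVec d} {S : Finset (Fin l)}
    (hx : ∀ i ∉ S, x i = 0) : ⟪blockRestrict u S, x⟫ = ⟪u, x⟫ := by
  simp only [PiLp.inner_apply, blockRestrict]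
  refine Finset.sum_congr rfl fun i _ => ?_
  by_cases hi : i ∈ S <;> simp [hi, hx]

theorem norm_blockRestrict_sq (u : BlockVec d) (S : Finset (Fin l)) :
    ‖blockRestrict u S‖ ^ 2 = ∑ i ∈ S, ‖u i‖ ^ 2 := by
  simp [PiLp.norm_sq_eq_of_L2, blockRestrict, apply_ite, Finset.sum_ite_mem]

theorem sq_inner_le_of_blockSparse {u x : BlockVec d} {c : ℝ} {k : ℕ} (hc : 0 ≤ c)
    (hu : ∀ i, ‖u i‖ ^ 2 ≤ c) (hx : BlockSparse k x) : ⟪u, x⟫ ^ 2 ≤ k * c * ‖x‖ ^ 2 := by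
  obtain ⟨S, hSk, hxS⟩ := hx
  have hS : ‖blockRestrict u S‖ ^ 2 ≤ k * c := by
    rw [norm_blockRestrict_sq]
    calc ∑ i ∈ S, ‖u i‖ ^ 2 ≤ S.card * c := by
          simpa using Finset.sum_le_card_nsmul S _ c fun i _ => hu i
      _ ≤ k * c := by gcongr
  calc ⟪u, x⟫ ^ 2 = ⟪blockRestrict u S, x⟫ ^ 2 := by rw [inner_blockRestrict_of_support u hxS]
    _ ≤ (‖blockRestrict u S‖ * ‖x‖) ^ 2 := by
      rw [← sq_abs]
      gcongr
      exact abs_real_inner_le_norm _ _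
    _ ≤ k * c * ‖x‖ ^ 2 := by
      rw [mul_pow]
      gcongr

variable {s dsize : ℕ}

theorem norm_x1Vec_apply_sq (hd : 0 < dsize) (hfirst : ∀ i : Fin l, (i : ℕ) < 2 * s → d i = dsize)
    (i : Fin l) : ‖x1Vec s dsize d i‖ ^ 2 = if (i : ℕ) < 2 * s then (2 * s : ℝ)⁻¹ else 0 := by
  rw [EuclideanSpace.real_norm_sq_eq]
  split_ifs with hi
  · simp only [x1Vec, hi, if_true, PiLp.toLp_apply]
    rw [Finset.sum_const, Finset.card_univ, Fintype.card_fin, hfirst i hi, nsmul_eq_mul, inv_pow,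
      Real.sq_sqrt (by positivity), mul_inv, mul_left_comm, mul_inv_cancel₀ (by positivity),
      mul_one]
  · simp [x1Vec, hi]

theorem norm_x1Vec (hd : 0 < dsize) (hs : 0 < s) (hl : 2 * s ≤ l)
    (hfirst : ∀ i : Fin l, (i : ℕ) < 2 * s → d i = dsize) : ‖x1Vec s dsize d‖ = 1 := by
  have hs0 : (s : ℝ) ≠ 0 := by positivity
  rw [← pow_eq_one_iff_of_nonneg (norm_nonneg _) two_ne_zero, PiLp.norm_sq_eq_of_L2]
  simp only [norm_x1Vec_apply_sq hd hfirst, Finset.sum_ite, Finset.sum_const_zero, add_zero,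
    Finset.sum_const, Fin.card_filter_val_lt, min_eq_right hl, nsmul_eq_mul]
  push_cast
  field_simp

theorem sq_inner_x1Vec_le (hd : 0 < dsize) (hfirst : ∀ i : Fin l, (i : ℕ) < 2 * s → d i = dsize)
    {k : ℕ} {x : BlockVec d} (hx : BlockSparse k x) :
    ⟪x1Vec s dsize d, x⟫ ^ 2 ≤ k / (2 * s) * ‖x‖ ^ 2 := by
  have hblock (i : Fin l) : ‖x1Vec s dsize d i‖ ^ 2 ≤ (2 * s : ℝ)⁻¹ := by
    rw [norm_x1Vec_apply_sq hd hfirst]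
    split_ifs
    · rfl
    · positivity
  simpa [div_eq_mul_inv] using sq_inner_le_of_blockSparse (by positivity) hblock hx

end BlockVec

/-- Theorem 1.2, sharpness construction — RIC bound: for the operator
`Φ x = (1-t/4)^{-1/2}(x - ⟨x₁,x⟩x₁)`, every `ε` with `εs > 1` and every nonzero block
`⌊ts⌋`-sparse `x` satisfy `(1 - t/(4-t) - ε)‖x‖² < ‖Φx‖² ≤ (1 + t/(4-t) + ε)‖x‖²`;
in particular `δ_{ts|ℐ} < t/(4-t) + ε`. -/
theorem sharpness_ric_bound {l : ℕ} (s dsize : ℕ) (d : Fin l → ℕ)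
    (hd : 0 < dsize) (hs : 1 ≤ s) (hl : 2 * s < l)
    (hfirst : ∀ i : Fin l, (i : ℕ) < 2 * s → d i = dsize)
    (t : ℝ) (ht0 : 0 < t) (ht4 : t < 4 / 3) :
    ∀ ε : ℝ, 1 < ε * s →
      ∀ x : BlockVec d, x ≠ 0 → BlockSparse ⌊t * s⌋₊ x →
        (1 - t / (4 - t) - ε) * ‖x‖ ^ 2 < ‖PhiMap t (x1Vec s dsize d) x‖ ^ 2 ∧
        ‖PhiMap t (x1Vec s dsize d) x‖ ^ 2 ≤ (1 + t / (4 - t) + ε) * ‖x‖ ^ 2 := by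
  intro ε hε x hx hsparse
  have hs0 : (0 : ℝ) < s := by exact_mod_cast hs
  have hslack : 0 < ε * ‖x‖ ^ 2 :=
    mul_pos (pos_of_mul_pos_left (by linarith) hs0.le) (by positivity)
  have hα : ⟪x1Vec s dsize d, x⟫ ^ 2 ≤ t / 2 * ‖x‖ ^ 2 := by
    refine (sq_inner_x1Vec_le hd hfirst hsparse).trans
      (mul_le_mul_of_nonneg_right ?_ (sq_nonneg _))
    rw [div_le_iff₀ (by positivity)]
    linarith [Nat.floor_le (show 0 ≤ t * s by positivity)]
  rw [norm_PhiMap_sq (by linarith) (norm_x1Vec hd hs hl.le hfirst)]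
  have h4t : 4 - t ≠ 0 := by linarith
  have hinv : (1 - t / 4)⁻¹ = 1 + t / (4 - t) := by field_simp; ring
  have hlower : (1 + t / (4 - t)) * (1 - t / 2) = 1 - t / (4 - t) := by field_simp; ring
  have hq : 0 ≤ 1 + t / (4 - t) := add_nonneg zero_le_one (div_nonneg ht0.le (by linarith))
  rw [hinv]
  constructor
  · nlinarith [mul_le_mul_of_nonneg_left hα hq]
  · nlinarith [sq_nonneg ⟪x1Vec s dsize d, x⟫]
end
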